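/- Let S be an inverse semigroup with zero, K a commutative unital ring, and suppose e, f₁, …, fₙ are non-zero idempotents with f₁, …, fₙ a cover of e. Then the element e − ⋁ᵢ fᵢ of K₀S is singular. Consequently the singular ideal of K₀S contains the tight ideal (the ideal generated by all such elements e − ⋁ F for F a cover of e). -/

import Mathlib

/-- An inverse semigroup with zero. -/
class InverseSemigroup0 (S : Type*) extends Semigroup S, Zero S, Star S where
  zero_mul : ∀ s : S, 0 * s = 0
  mul_zero : ∀ s : S, s * 0 = 0
  mul_star_mul_self : ∀ s : S, s * star s * s = s
  star_mul_self_star : ∀ s : S, star s * s * star s = star s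
  star_unique : ∀ s t : S, s * t * s = s → t * s * t = t → t = star s

/-- The natural partial order on an inverse semigroup. -/
def NatLe {S : Type*} [InverseSemigroup0 S] (a b : S) : Prop := a = b * star a * a

variable (K S : Type*) [CommRing K] [InverseSemigroup0 S]

/-- The ring congruence on the semigroup algebra identifying the zero of `S`
with the zero of the algebra. -/
noncomputable def contractedCon : RingCon (MonoidAlgebra K S) :=
  ringConGen (fun a b => a = MonoidAlgebra.single (0 : S) (1 : K) ∧ b = 0)

/-- The contracted semigroup algebra `K₀S`: the `K`-algebra with basis `S \ {0}`
and multiplication extending that of `S`, realized as the quotient of the semigroup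
algebra of `S` by the span of the zero of `S`. -/
abbrev Kzero := (contractedCon K S).Quotient

/-- The quotient map onto the contracted semigroup algebra. -/
noncomputable def mk0 (a : MonoidAlgebra K S) : Kzero K S :=
  (a : (contractedCon K S).Quotient)

/-- The canonical map `S → K₀S`. -/
noncomputable def iota (s : S) : Kzero K S := mk0 K S (MonoidAlgebra.single s 1)

/-- An element of `K₀S` is singular if for every non-zero idempotent `e` there is a
non-zero idempotent `f ≤ e` with `a f = 0`. -/
noncomputable def Singular (x : Kzero K S) : Prop :=
  ∀ e : S, IsIdempotentElem e → e ≠ 0 →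
    ∃ f : S, IsIdempotentElem f ∧ f ≠ 0 ∧ NatLe f e ∧ x * iota K S f = 0

/-- `J` is a two-sided ideal of the (non-unital) ring `K₀S`. -/
def IsIdealSet (J : Set (Kzero K S)) : Prop :=
  (0 : Kzero K S) ∈ J ∧ (∀ a ∈ J, ∀ b ∈ J, a + b ∈ J) ∧ (∀ a ∈ J, -a ∈ J) ∧
    ∀ a ∈ J, ∀ x : Kzero K S, x * a ∈ J ∧ a * x ∈ J

/-- Iterated join `a₁ ∨ ⋯ ∨ aₙ` of (commuting) idempotents in a ring,
where `a ∨ b = a + b - a * b`. -/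
noncomputable def joinList : List (Kzero K S) → Kzero K S
  | [] => 0
  | a :: l => a + joinList l - a * joinList l

/-- `F` is a cover of the idempotent `e` by non-zero idempotents below `e`:
every non-zero idempotent below `e` meets some member of `F`. -/
def IsCover (e : S) (F : List S) : Prop :=
  (∀ f ∈ F, IsIdempotentElem f ∧ f ≠ 0 ∧ NatLe f e) ∧
    ∀ h : S, IsIdempotentElem h → h ≠ 0 → NatLe h e → ∃ f ∈ F, h * f ≠ 0

/-- The generators `e - ⋁ F` (for `F` a cover of the non-zero idempotent `e`)
of the tight ideal of `K₀S`. -/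
noncomputable def TightGen : Set (Kzero K S) :=
  {x | ∃ (e : S) (F : List S), IsIdempotentElem e ∧ e ≠ 0 ∧ IsCover S e F ∧
        x = iota K S e - joinList K S (F.map (iota K S))}

/-- The tight ideal of `K₀S`: the two-sided ideal generated by the elements
`e - ⋁ F` with `F` a cover of `e`. -/
noncomputable def TightIdealSet : Set (Kzero K S) :=
  ⋂₀ {J : Set (Kzero K S) | IsIdealSet K S J ∧ TightGen K S ⊆ J}

/-!
Singular elements form a two-sided ideal. Closure under right multiplication by `s ∈ S` comes
from conjugating idempotents: an idempotent `f ≤ s e s*` with `a f = 0` pulls back to the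
idempotent `s* f s ≤ e`, and `a s (s* f s) = a f s = 0`. For a cover `F` of `e` and a non-zero
idempotent `h`, either `h e = 0`, and then `(e - ⋁ F) h = 0`, or `h e` meets some `fᵢ ∈ F`,
and then `h e fᵢ` is a non-zero idempotent below `h` killed by `e - ⋁ F`, because
`(e - ⋁ F) fᵢ = fᵢ - fᵢ = 0`.
-/

namespace InverseSemigroup0

variable {S : Type*} [InverseSemigroup0 S] {e f s : S}

theorem star_star (s : S) : star (star s) = s :=
  (star_unique _ _ (star_mul_self_star s) (mul_star_mul_self s)).symm

theorem star_eq_self_of_isIdempotentElem (he : IsIdempotentElem e) : star e = e :=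
  (star_unique e e (by rw [he.eq, he.eq]) (by rw [he.eq, he.eq])).symm

theorem isIdempotentElem_star_mul_self (s : S) : IsIdempotentElem (star s * s) := by
  rw [IsIdempotentElem, ← mul_assoc, star_mul_self_star]

theorem isIdempotentElem_mul_star_self (s : S) : IsIdempotentElem (s * star s) := by
  simpa only [star_star] using isIdempotentElem_star_mul_self (star s)

theorem isIdempotentElem_mul (he : IsIdempotentElem e) (hf : IsIdempotentElem f) :
    IsIdempotentElem (e * f) := by
  set x := star (e * f) with hx_def
  have hx₁ : e * (f * (x * (e * f))) = e * f := by
    simpa only [mul_assoc] using mul_star_mul_self (e * f)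
  have hx₂ (z : S) : x * (e * (f * (x * z))) = x * z := by
    simpa only [mul_assoc] using congrArg (· * z) (star_mul_self_star (e * f))
  -- `f x e` is another inverse of `e f`
  have hfxe : f * x * e = x := star_unique (e * f) (f * x * e)
    (by simp only [mul_assoc]; rw [hf.mul_self_mul, he.mul_self_mul, hx₁])
    (by simp only [mul_assoc]; rw [he.mul_self_mul, hf.mul_self_mul, hx₂])
  have hx : IsIdempotentElem x :=
    calc x * x = f * x * e * (f * x * e) := by rw [hfxe]
      _ = f * (x * (e * (f * (x * e)))) := by simp only [mul_assoc]
      _ = x := by rw [hx₂, ← mul_assoc, hfxe]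
  rw [← star_star (e * f), ← hx_def, star_eq_self_of_isIdempotentElem hx]
  exact hx

theorem commute_of_isIdempotentElem (he : IsIdempotentElem e) (hf : IsIdempotentElem f) :
    Commute e f := by
  have hfe : f * e = star (e * f) := star_unique (e * f) (f * e)
    (by simp only [mul_assoc]; rw [hf.mul_self_mul, he.mul_self_mul, ← mul_assoc e,
      (isIdempotentElem_mul he hf).eq])
    (by simp only [mul_assoc]; rw [he.mul_self_mul, hf.mul_self_mul, ← mul_assoc f,
      (isIdempotentElem_mul hf he).eq])
  rw [Commute, SemiconjBy, hfe, star_eq_self_of_isIdempotentElem (isIdempotentElem_mul he hf)]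

theorem isIdempotentElem_conj (he : IsIdempotentElem e) (s : S) :
    IsIdempotentElem (s * e * star s) := by
  have hcomm := commute_of_isIdempotentElem he (isIdempotentElem_star_mul_self s)
  calc s * e * star s * (s * e * star s) = s * (e * (star s * s)) * e * star s := by
        simp only [mul_assoc]
    _ = (s * star s * s) * (e * e) * star s := by rw [hcomm.eq]; simp only [mul_assoc]
    _ = s * e * star s := by rw [mul_star_mul_self, he.eq]

theorem mul_eq_zero_of_conj_eq_zero (he : IsIdempotentElem e) (h : s * e * star s = 0) :
    s * e = 0 := by
  have hcomm := commute_of_isIdempotentElem he (isIdempotentElem_star_mul_self s)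
  calc s * e = (s * star s * s) * e := by rw [mul_star_mul_self]
    _ = s * (e * (star s * s)) := by rw [hcomm.eq]; simp only [mul_assoc]
    _ = 0 := by rw [← mul_assoc, ← mul_assoc, h, InverseSemigroup0.zero_mul]

theorem natLe_iff (hf : IsIdempotentElem f) : NatLe f e ↔ e * f = f := by
  rw [NatLe, star_eq_self_of_isIdempotentElem hf, mul_assoc, hf.eq, eq_comm]

theorem natLe_refl (he : IsIdempotentElem e) : NatLe e e :=
  (natLe_iff he).2 he.eq

theorem natLe_trans {g : S} (hg : IsIdempotentElem g) (hf : IsIdempotentElem f)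
    (hgf : NatLe g f) (hfe : NatLe f e) : NatLe g e := by
  rw [natLe_iff hg] at hgf ⊢
  rw [natLe_iff hf] at hfe
  rw [← hgf, ← mul_assoc, hfe]

theorem star_mul_mul_of_natLe_conj (he : IsIdempotentElem e) (hf : IsIdempotentElem f)
    (hfe : NatLe f (s * e * star s)) :
    IsIdempotentElem (star s * f * s) ∧ NatLe (star s * f * s) e ∧
      s * (star s * f * s) = f * s ∧ s * (star s * f * s) * star s = f := by
  rw [natLe_iff hf] at hfe
  have hss : s * star s * f = f := by
    rw [← hfe, ← mul_assoc, ← mul_assoc, ← mul_assoc, mul_star_mul_self]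
  have hss' : f * (s * star s) = f := by
    rw [(commute_of_isIdempotentElem hf (isIdempotentElem_mul_star_self s)).eq, hss]
  have hcomm := commute_of_isIdempotentElem he (isIdempotentElem_star_mul_self s)
  have hf' : IsIdempotentElem (star s * f * s) :=
    calc star s * f * s * (star s * f * s) = star s * f * (s * star s * f) * s := by
          simp only [mul_assoc]
      _ = star s * f * s := by rw [hss, mul_assoc (star s), hf.eq]
  refine ⟨hf', (natLe_iff hf').2 ?_, by simp only [← mul_assoc, hss], ?_⟩
  · calc e * (star s * f * s) = e * (star s * (s * e * star s * f) * s) := by rw [hfe]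
      _ = e * (star s * s) * e * star s * f * s := by simp only [mul_assoc]
      _ = star s * (s * e * star s * f) * s := by
          rw [hcomm.eq, mul_assoc (star s * s) e e, he.eq]; simp only [mul_assoc]
      _ = star s * f * s := by rw [hfe]
  · simp only [← mul_assoc, hss]
    rw [mul_assoc, hss']

end InverseSemigroup0

open InverseSemigroup0 hiding zero_mul mul_zero
open MonoidAlgebra

section ContractedAlgebra

variable {K S}

theorem iota_mul (s t : S) : iota K S s * iota K S t = iota K S (s * t) := by
  simp only [iota, mk0, ← RingCon.coe_mul, single_mul_single, one_mul]

theorem iota_zero : iota K S (0 : S) = 0 :=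
  (RingCon.eq _).2 (RingConGen.Rel.of _ _ ⟨rfl, rfl⟩)

theorem mk0_single_mul_iota (s f : S) (c : K) :
    mk0 K S (single s c) * iota K S f = mk0 K S (single (s * f) c) := by
  simp only [iota, mk0, ← RingCon.coe_mul, single_mul_single, mul_one]

theorem mk0_single_eq_iota_mul (t : S) (c : K) :
    mk0 K S (single t c) = iota K S t * mk0 K S (single (star t * t) c) := by
  simp only [iota, mk0, ← RingCon.coe_mul, single_mul_single, one_mul, ← mul_assoc,
    mul_star_mul_self]

theorem joinList_mul_eq_zero {y : Kzero K S} :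
    ∀ {L : List (Kzero K S)}, (∀ a ∈ L, a * y = 0) → joinList K S L * y = 0
  | [], _ => zero_mul y
  | a :: l, h => by
    have hl := joinList_mul_eq_zero fun b hb => h b (List.mem_cons_of_mem a hb)
    rw [joinList, sub_mul, add_mul, mul_assoc, hl, h a List.mem_cons_self]
    simp

theorem commute_joinList {y : Kzero K S} :
    ∀ {L : List (Kzero K S)}, (∀ a ∈ L, Commute a y) → Commute (joinList K S L) y
  | [], _ => Commute.zero_left y
  | a :: l, h => by
    have hl := commute_joinList fun b hb => h b (List.mem_cons_of_mem a hb)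
    have ha := h a List.mem_cons_self
    exact (ha.add_left hl).sub_left (ha.mul_left hl)

theorem joinList_mul_eq_self {y : Kzero K S} :
    ∀ {L : List (Kzero K S)}, (∀ a ∈ L, Commute a y) → (∃ b ∈ L, b * y = y) →
      joinList K S L * y = y
  | [], _, ⟨_, hb, _⟩ => absurd hb List.not_mem_nil
  | a :: l, h, ⟨b, hb, hby⟩ => by
    have hl (c) (hc : c ∈ l) := h c (List.mem_cons_of_mem a hc)
    rw [joinList, sub_mul, add_mul, mul_assoc]
    rcases List.mem_cons.1 hb with rfl | hbl
    · rw [(commute_joinList hl).eq, ← mul_assoc, hby, add_sub_cancel_right]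
    · rw [joinList_mul_eq_self hl ⟨b, hbl, hby⟩, add_sub_cancel_left]

end ContractedAlgebra

section Singular

variable {K S}

theorem mul_iota_eq_zero_of_natLe {x : Kzero K S} {f g : S} (hg : IsIdempotentElem g)
    (hgf : NatLe g f) (hx : x * iota K S f = 0) : x * iota K S g = 0 := by
  rw [← (natLe_iff hg).1 hgf, ← iota_mul, ← mul_assoc, hx, zero_mul]

theorem singular_zero : Singular K S 0 := fun e he he0 =>
  ⟨e, he, he0, natLe_refl he, zero_mul _⟩

namespace Singular

variable {a : Kzero K S}

theorem add {b : Kzero K S} (ha : Singular K S a) (hb : Singular K S b) :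
    Singular K S (a + b) := by
  intro e he he0
  obtain ⟨f, hf, hf0, hfe, haf⟩ := ha e he he0
  obtain ⟨g, hg, hg0, hgf, hbg⟩ := hb f hf hf0
  exact ⟨g, hg, hg0, natLe_trans hg hf hgf hfe,
    by rw [add_mul, mul_iota_eq_zero_of_natLe hg hgf haf, hbg, add_zero]⟩

theorem neg (ha : Singular K S a) : Singular K S (-a) := fun e he he0 =>
  let ⟨f, hf, hf0, hfe, haf⟩ := ha e he he0
  ⟨f, hf, hf0, hfe, by rw [neg_mul a, haf, neg_zero]⟩

theorem mul_left (ha : Singular K S a) (x : Kzero K S) : Singular K S (x * a) :=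
  fun e he he0 =>
    let ⟨f, hf, hf0, hfe, haf⟩ := ha e he he0
    ⟨f, hf, hf0, hfe, by rw [mul_assoc, haf, mul_zero]⟩

theorem mul_iota (ha : Singular K S a) (s : S) : Singular K S (a * iota K S s) := by
  intro e he he0
  by_cases hconj : s * e * star s = 0
  · refine ⟨e, he, he0, natLe_refl he, ?_⟩
    rw [mul_assoc, iota_mul, mul_eq_zero_of_conj_eq_zero he hconj, iota_zero, mul_zero]
  · obtain ⟨f, hf, hf0, hf_le, haf⟩ := ha _ (isIdempotentElem_conj he s) hconj
    obtain ⟨hf', hf'e, hsf', hsf's⟩ := star_mul_mul_of_natLe_conj he hf hf_le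
    refine ⟨star s * f * s, hf', fun h0 => hf0 ?_, hf'e, ?_⟩
    · rw [← hsf's, h0, InverseSemigroup0.mul_zero, InverseSemigroup0.zero_mul]
    · rw [mul_assoc, iota_mul, hsf', ← iota_mul, ← mul_assoc, haf, zero_mul]

theorem mul_mk0_single (ha : Singular K S a) (s : S) (c : K) :
    Singular K S (a * mk0 K S (single s c)) := by
  intro e he he0
  obtain ⟨f, hf, hf0, hfe, hasf⟩ := ha.mul_iota s e he he0
  refine ⟨f, hf, hf0, hfe, ?_⟩
  rw [mul_assoc, mk0_single_mul_iota, mk0_single_eq_iota_mul, ← iota_mul]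
  simp only [← mul_assoc, hasf, zero_mul]

theorem mul_right (ha : Singular K S a) (x : Kzero K S) : Singular K S (a * x) := by
  obtain ⟨p, rfl⟩ := Quotient.exists_rep x
  change Singular K S (a * mk0 K S p)
  induction p using MonoidAlgebra.induction_linear with
  | zero => simpa only [mk0, RingCon.coe_zero, mul_zero] using singular_zero
  | add p q hp hq => simpa only [mk0, RingCon.coe_add, mul_add] using hp.add hq
  | single s c => exact ha.mul_mk0_single s c

end Singular

theorem isIdealSet_singular : IsIdealSet K S {x | Singular K S x} :=
  ⟨singular_zero, fun _ ha _ hb => ha.add hb, fun _ ha => ha.neg,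
    fun _ ha x => ⟨ha.mul_left x, ha.mul_right x⟩⟩

theorem singular_iota_sub_joinList_of_isCover {e : S} {F : List S} (he : IsIdempotentElem e)
    (hF : IsCover S e F) : Singular K S (iota K S e - joinList K S (F.map (iota K S))) := by
  obtain ⟨hF_le, hF_cover⟩ := hF
  intro h hh hh0
  by_cases hhe : h * e = 0
  · refine ⟨h, hh, hh0, natLe_refl hh, ?_⟩
    have heh : e * h = 0 := by rw [(commute_of_isIdempotentElem he hh).eq, hhe]
    have hJh : joinList K S (F.map (iota K S)) * iota K S h = 0 := by
      refine joinList_mul_eq_zero ?_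
      simp only [List.mem_map]
      rintro _ ⟨f, hfF, rfl⟩
      obtain ⟨hf, -, hfe⟩ := hF_le f hfF
      rw [iota_mul, ← (natLe_iff hf).1 hfe, (commute_of_isIdempotentElem he hf).eq, mul_assoc,
        heh, InverseSemigroup0.mul_zero, iota_zero]
    rw [sub_mul, iota_mul, heh, iota_zero, hJh, sub_zero]
  · have hhe' : IsIdempotentElem (h * e) := isIdempotentElem_mul hh he
    have hhe_le : NatLe (h * e) e := (natLe_iff hhe').2 <| by
      rw [← mul_assoc, ← (commute_of_isIdempotentElem hh he).eq, mul_assoc, he.eq]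
    obtain ⟨f, hfF, hmeet⟩ := hF_cover _ hhe' hhe hhe_le
    obtain ⟨hf, -, hfe⟩ := hF_le f hfF
    have hxf : (iota K S e - joinList K S (F.map (iota K S))) * iota K S f = 0 := by
      rw [sub_mul, iota_mul, (natLe_iff hf).1 hfe, joinList_mul_eq_self, sub_self]
      · simp only [List.mem_map]
        rintro _ ⟨g, hgF, rfl⟩
        rw [Commute, SemiconjBy, iota_mul, iota_mul,
          (commute_of_isIdempotentElem (hF_le g hgF).1 hf).eq]
      · exact ⟨iota K S f, List.mem_map_of_mem hfF, by rw [iota_mul, hf.eq]⟩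
    refine ⟨h * e * f, isIdempotentElem_mul hhe' hf, hmeet,
      (natLe_iff (isIdempotentElem_mul hhe' hf)).2 (by simp only [← mul_assoc, hh.eq]), ?_⟩
    rw [(commute_of_isIdempotentElem hhe' hf).eq, ← iota_mul, ← mul_assoc, hxf, zero_mul]

theorem tightGen_subset_singular : TightGen K S ⊆ {x | Singular K S x} := by
  rintro _ ⟨e, F, he, -, hF, rfl⟩
  exact singular_iota_sub_joinList_of_isCover he hF

end Singular

/-- If `f₁, …, fₙ` are non-zero idempotents covering the non-zero idempotent `e`, then
`e - ⋁ᵢ fᵢ` is singular in `K₀S`; consequently the singular ideal contains the tight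
ideal. -/
theorem stmt9 (K S : Type*) [CommRing K] [InverseSemigroup0 S] :
    (∀ (e : S) (F : List S), IsIdempotentElem e → e ≠ 0 → IsCover S e F →
        Singular K S (iota K S e - joinList K S (F.map (iota K S)))) ∧
    TightIdealSet K S ⊆ {x : Kzero K S | Singular K S x} :=
  ⟨fun _ _ he _ hF => singular_iota_sub_joinList_of_isCover he hF,
    Set.sInter_subset_of_mem ⟨isIdealSet_singular, tightGen_subset_singular⟩⟩
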